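/- arXiv:2408.11547 — 6 statements merged into one kernel-verified Lean document; each statement's English description precedes it below -/
import Mathlib

section
/- Under the same setup, the reordered vector (U'₁,…,U'ₙ) = σ_{X₁,…,Xₙ}(U₁,…,Uₙ) is independent of (X₁,…,Xₙ): for every measurable M ⊆ ℝⁿ, the conditional expectation E[1_M(U'₁,…,U'ₙ) | X₁,…,Xₙ] equals the constant P((U'₁,…,U'ₙ) ∈ M) almost surely. -/
/-!
On the event `{σ X = π}` the reordered vector is `U ∘ π`. Since `U` is independent of `X` and its
law is invariant under coordinate permutations, summing over the finitely many `π` gives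
`P(X ∈ A, U' ∈ B) = P(X ∈ A) P(U ∈ B)`. Hence `U'` has the law of `U` and is independent of `X`,
so its conditional expectations given `X` are constants.
-/

open MeasureTheory ProbabilityTheory

lemma measurable_comp_perm {ι β : Type*} [MeasurableSpace β] (π : Equiv.Perm ι) :
    Measurable fun u : ι → β => u ∘ π :=
  measurable_pi_lambda _ fun i => measurable_pi_apply (π i)

lemma MeasureTheory.Measure.pi_map_comp_perm {ι β : Type*} [Fintype ι] [MeasurableSpace β] (η : Measure β)
    [SigmaFinite η] (π : Equiv.Perm ι) :
    (Measure.pi fun _ : ι => η).map (· ∘ π) = Measure.pi fun _ : ι => η :=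
  (measurePreserving_arrowCongr' (fun _ => η) (fun _ => η) π.symm (MeasurableEquiv.refl β)
    fun _ => MeasurePreserving.id η).map_eq

section PermuteByFiber

variable {Ω α β ι : Type*} {X : Ω → α} {U : Ω → ι → β} {σ : α → Equiv.Perm ι}

lemma preimage_inter_permute_eq_iUnion (A : Set α) (B : Set (ι → β)) :
    X ⁻¹' A ∩ (fun ω => U ω ∘ σ (X ω)) ⁻¹' B =
      ⋃ π : Equiv.Perm ι, X ⁻¹' (A ∩ {x | σ x = π}) ∩ U ⁻¹' ((· ∘ π) ⁻¹' B) := by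
  ext ω
  simp only [Set.mem_inter_iff, Set.mem_preimage, Set.mem_iUnion, Set.mem_ofPred_eq]
  constructor
  · rintro ⟨hA, hB⟩
    exact ⟨σ (X ω), ⟨hA, rfl⟩, hB⟩
  · rintro ⟨π, ⟨hA, rfl⟩, hB⟩
    exact ⟨hA, hB⟩

variable [MeasurableSpace Ω] [MeasurableSpace α] [MeasurableSpace β] [Finite ι]
  (hX : Measurable X) (hU : Measurable U) (hσ : ∀ π, MeasurableSet {x | σ x = π})
include hX hU hσ

lemma measurable_permute : Measurable fun ω => U ω ∘ σ (X ω) := by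
  intro B hB
  have h := preimage_inter_permute_eq_iUnion (X := X) (U := U) (σ := σ) Set.univ B
  rw [Set.preimage_univ, Set.univ_inter] at h
  rw [h]
  exact .iUnion fun π =>
    (hX (MeasurableSet.univ.inter (hσ π))).inter (hU (measurable_comp_perm π hB))

lemma measure_preimage_inter_permute (P : Measure Ω) {A : Set α} {B : Set (ι → β)}
    (hA : MeasurableSet A) (hB : MeasurableSet B) :
    P (X ⁻¹' A ∩ (fun ω => U ω ∘ σ (X ω)) ⁻¹' B) =
      ∑' π, P (X ⁻¹' (A ∩ {x | σ x = π}) ∩ U ⁻¹' ((· ∘ π) ⁻¹' B)) := by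
  rw [preimage_inter_permute_eq_iUnion]
  refine measure_iUnion (fun π π' hne => ?_) fun π =>
    (hX (hA.inter (hσ π))).inter (hU (measurable_comp_perm π hB))
  exact Set.disjoint_left.mpr fun ω h h' => hne (h.1.2.symm.trans h'.1.2)

theorem indepFun_permute {P : Measure Ω} [IsProbabilityMeasure P] (hindep : IndepFun X U P)
    (hperm : ∀ π : Equiv.Perm ι, (P.map U).map (· ∘ π) = P.map U) :
    IndepFun X (fun ω => U ω ∘ σ (X ω)) P := by
  have hinv (π : Equiv.Perm ι) {B : Set (ι → β)} (hB : MeasurableSet B) :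
      P (U ⁻¹' ((· ∘ π) ⁻¹' B)) = P (U ⁻¹' B) := by
    rw [← Measure.map_apply hU (measurable_comp_perm π hB),
      ← Measure.map_apply (measurable_comp_perm π) hB, hperm, Measure.map_apply hU hB]
  have hjoint {A : Set α} {B : Set (ι → β)} (hA : MeasurableSet A) (hB : MeasurableSet B) :
      P (X ⁻¹' A ∩ (fun ω => U ω ∘ σ (X ω)) ⁻¹' B) = P (X ⁻¹' A) * P (U ⁻¹' B) := by
    have hfibers := measure_preimage_inter_permute hX hU hσ P hA MeasurableSet.univ
    simp only [Set.preimage_univ, Set.inter_univ] at hfibers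
    rw [measure_preimage_inter_permute hX hU hσ P hA hB, hfibers, ← ENNReal.tsum_mul_right]
    refine tsum_congr fun π => ?_
    rw [hindep.measure_inter_preimage_eq_mul _ _ (hA.inter (hσ π)) (measurable_comp_perm π hB),
      hinv π hB]
  rw [indepFun_iff_measure_inter_preimage_eq_mul]
  intro A B hA hB
  have hlaw := hjoint MeasurableSet.univ hB
  simp only [Set.preimage_univ, Set.univ_inter, measure_univ, one_mul] at hlaw
  rw [hjoint hA hB, hlaw]

end PermuteByFiber

lemma condExp_indicator_comp_of_indepFun {Ω α γ : Type*} [MeasurableSpace Ω] [MeasurableSpace α]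
    [MeasurableSpace γ] (P : Measure Ω) [IsProbabilityMeasure P] {X : Ω → α} {Y : Ω → γ}
    (hX : Measurable X) (hY : Measurable Y) (hindep : IndepFun X Y P) {M : Set γ}
    (hM : MeasurableSet M) :
    P[(fun ω => M.indicator (fun _ => (1 : ℝ)) (Y ω)) | MeasurableSpace.comap X inferInstance]
      =ᵐ[P] fun _ => (P {ω | Y ω ∈ M}).toReal := by
  have hf : StronglyMeasurable[MeasurableSpace.comap Y inferInstance]
      (fun ω => M.indicator (fun _ => (1 : ℝ)) (Y ω)) :=
    ((measurable_const.indicator hM).comp (Measurable.of_comap_le le_rfl)).stronglyMeasurable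
  refine (condExp_indep_eq hY.comap_le hX.comap_le hf hindep.symm).trans
    (Filter.EventuallyEq.of_eq (funext fun _ => ?_))
  change ∫ ω, (Y ⁻¹' M).indicator (fun _ => (1 : ℝ)) ω ∂P = _
  rw [integral_indicator_const _ (hY hM), smul_eq_mul, mul_one]
  rfl

/-- Under the same setup, the reordered vector `U' = σ_{X}(U)` is independent of `X`:
`E[1_M(U') | X] = P(U' ∈ M)` a.s. for every measurable `M`. -/
theorem stmt_2 {Ω : Type*} [MeasurableSpace Ω] (P : Measure Ω) [IsProbabilityMeasure P]
    (n : ℕ) (η : Measure ℝ) [IsProbabilityMeasure η]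
    (X U : Ω → (Fin n → ℝ)) (hX : Measurable X) (hU : Measurable U)
    (hindep : IndepFun X U P)
    (hUlaw : Measure.map U P = Measure.pi fun _ : Fin n => η)
    (σ : (Fin n → ℝ) → Equiv.Perm (Fin n))
    (hσ : ∀ π : Equiv.Perm (Fin n), MeasurableSet {x : Fin n → ℝ | σ x = π})
    (M : Set (Fin n → ℝ)) (hM : MeasurableSet M) :
    P[(fun ω => Set.indicator M (fun _ => (1 : ℝ)) (fun i => U ω (σ (X ω) i))) |
        MeasurableSpace.comap X inferInstance]
      =ᵐ[P] fun _ => (P {ω | (fun i => U ω (σ (X ω) i)) ∈ M}).toReal := by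
  have hpermuted : IndepFun X (fun ω => U ω ∘ σ (X ω)) P :=
    indepFun_permute hX hU hσ hindep fun π => by rw [hUlaw, Measure.pi_map_comp_perm]
  exact condExp_indicator_comp_of_indepFun P hX (measurable_permute hX hU hσ) hpermuted hM
end

section
/- Let (X,Y) be a random vector, and let (X₁,Y₁), (X₂,Y₂), (X₃,Y₃) be independent copies. Define μ₁ = P(Y₁ ∧ Y₂ < Y₃ ≤ Y₁ ∨ Y₂ | X₁ = X₂) and μ₂ = P(Y₁ < Y₂ ≤ Y₃), where the conditioning P(· | X₁ = X₂) means: draw X from the law of X₁, then draw Y₁, Y₂ independently from the conditional law of Y given that common X. If Y is not almost surely constant, then the Dette–Siburg–Stoimenov measure ξ = [∫ Var(E[1_{[y,∞)}(Y) | X]) dP^Y(y)] / [∫ Var(1_{[y,∞)}(Y)) dP^Y(y)] satisfies ξ = 1 − μ₁/(2μ₂). -/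
/-!
Write `G y = P(Y ≥ y)` and `p x y = P(Y ≥ y | X = x)`. Integrating out `Y₃` and then `Y₁` gives
`μ₂ = ∫ P(Y < y) G y dP^Y(y) = ∫ (G - G²) dP^Y`, the denominator of `ξ`. In `μ₁`, the event
`Y₁ ∧ Y₂ < Y₃ ≤ Y₁ ∨ Y₂` says that exactly one of `Y₁, Y₂` is `≥ Y₃`, so integrating out `Y₁, Y₂`
first leaves `2 (p x y - p x y ²)`; since `∫ p x y dP^X(x) = G y`, this gives `μ₁ = 2 (D - N)`
where `N / D = ξ`.

The denominator vanishes only for a point mass: as `G > 0` holds `P^Y`-a.e., it forces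
`P(Y < y) = 1 - G y = 0` for `P^Y`-a.e. `y`; the union of these null open half-lines is null by
second countability, so `P^Y` is carried by the at most one such `y` lying above all the others.
-/

open MeasureTheory ProbabilityTheory Set

lemma measure_biUnion_null_of_isOpen {α ι : Type*} [TopologicalSpace α]
    [SecondCountableTopology α] [MeasurableSpace α] {μ : Measure α} {s : Set ι} {f : ι → Set α}
    (hf : ∀ i ∈ s, IsOpen (f i)) (hμ : ∀ i ∈ s, μ (f i) = 0) : μ (⋃ i ∈ s, f i) = 0 := by
  obtain ⟨t, hts, htc, heq⟩ := TopologicalSpace.isOpen_biUnion_countable s f hf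
  rw [← heq]
  exact (measure_biUnion_null_iff htc).2 fun i hi => hμ i (hts hi)

lemma subsingleton_sdiff_biUnion_Iio {α : Type*} [LinearOrder α] (s : Set α) :
    (s \ ⋃ y ∈ s, Iio y).Subsingleton := by
  intro a ha b hb
  by_contra hab
  rcases lt_or_gt_of_ne hab with h | h
  · exact ha.2 (mem_biUnion hb.1 h)
  · exact hb.2 (mem_biUnion ha.1 h)

lemma subsingleton_sdiff_biUnion_Ioi {α : Type*} [LinearOrder α] (s : Set α) :
    (s \ ⋃ y ∈ s, Ioi y).Subsingleton :=
  subsingleton_sdiff_biUnion_Iio (α := αᵒᵈ) s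

lemma measureReal_mem_Icc {α : Type*} [MeasurableSpace α] {μ : Measure α}
    [IsZeroOrProbabilityMeasure μ] {s : Set α} : μ.real s ∈ Icc 0 1 :=
  ⟨measureReal_nonneg, measureReal_le_one⟩

lemma sq_mem_Icc {t : ℝ} (ht : t ∈ Icc 0 1) : t ^ 2 ∈ Icc 0 1 :=
  ⟨sq_nonneg t, pow_le_one₀ ht.1 ht.2⟩

lemma sub_sq_mem_Icc {t : ℝ} (ht : t ∈ Icc 0 1) : t - t ^ 2 ∈ Icc 0 1 :=
  ⟨by nlinarith [ht.1, ht.2], by nlinarith [ht.1, ht.2]⟩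

lemma integral_integral_integral_rotate {α β γ : Type*} [MeasurableSpace α] [MeasurableSpace β]
    [MeasurableSpace γ] {μ : Measure α} {ν : Measure β} {ρ : Measure γ} [IsFiniteMeasure μ]
    [IsFiniteMeasure ν] [IsFiniteMeasure ρ] {f : α → β → γ → ℝ}
    (hf : Measurable fun p : α × β × γ => f p.1 p.2.1 p.2.2) {C : ℝ}
    (hC : ∀ a b c, ‖f a b c‖ ≤ C) :
    ∫ a, ∫ b, ∫ c, f a b c ∂ρ ∂ν ∂μ = ∫ c, ∫ a, ∫ b, f a b c ∂ν ∂μ ∂ρ := by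
  have hbc : ∀ a, ∫ b, ∫ c, f a b c ∂ρ ∂ν = ∫ c, ∫ b, f a b c ∂ν ∂ρ := fun a =>
    integral_integral_swap <| .of_bound
      (hf.comp (measurable_const.prodMk measurable_id)).aestronglyMeasurable C
      (ae_of_all _ fun p => hC a p.1 p.2)
  simp_rw [hbc]
  have hm : StronglyMeasurable fun p : α × γ => ∫ b, f p.1 b p.2 ∂ν :=
    (hf.comp (measurable_fst.fst.prodMk (measurable_snd.prodMk measurable_fst.snd))
      ).stronglyMeasurable.integral_prod_right'
  exact integral_integral_swap <| .of_bound hm.aestronglyMeasurable (C * ν.real univ)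
    (ae_of_all _ fun p => norm_integral_le_of_norm_le_const (ae_of_all _ fun b => hC p.1 b p.2))

lemma ite_min_lt_and_le_max (y₁ y₂ y₃ : ℝ) :
    (if min y₁ y₂ < y₃ ∧ y₃ ≤ max y₁ y₂ then (1 : ℝ) else 0)
      = (if y₃ ≤ y₁ then 1 else 0)
        + (1 - 2 * (if y₃ ≤ y₁ then 1 else 0)) * (if y₃ ≤ y₂ then 1 else 0) := by
  split_ifs <;> grind

section Real

variable {μ : Measure ℝ}

lemma measure_eq_zero_of_forall_measure_Ici_eq_zero {s : Set ℝ}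
    (hs : ∀ y ∈ s, μ (Ici y) = 0) : μ s = 0 := by
  set V := ⋃ y ∈ s, Ioi y
  have hV : μ V = 0 := measure_biUnion_null_of_isOpen (fun _ _ => isOpen_Ioi)
    fun y hy => measure_mono_null Ioi_subset_Ici_self (hs y hy)
  have hrest : μ (s \ V) = 0 := by
    rcases (subsingleton_sdiff_biUnion_Ioi s).eq_empty_or_singleton with h | ⟨b, h⟩
    · rw [h, measure_empty]
    · have hb : b ∈ s := (h ▸ mem_singleton b : b ∈ s \ V).1
      rw [h]
      exact measure_mono_null (singleton_subset_iff.2 self_mem_Ici) (hs b hb)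
  refine measure_mono_null ?_ (measure_union_null hV hrest)
  rw [union_sdiff_self]
  exact subset_union_right

lemma ae_measure_Ici_ne_zero (μ : Measure ℝ) : ∀ᵐ y ∂μ, μ (Ici y) ≠ 0 :=
  measure_eq_zero_of_forall_measure_Ici_eq_zero fun _ hy => not_not.1 hy

lemma exists_measure_singleton_eq_one_of_ae_measure_Iio_eq_zero [IsProbabilityMeasure μ]
    (h : ∀ᵐ y ∂μ, μ (Iio y) = 0) : ∃ c, μ {c} = 1 := by
  set s := {y | μ (Iio y) = 0}
  set U := ⋃ y ∈ s, Iio y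
  have hU : μ U = 0 := measure_biUnion_null_of_isOpen (fun _ _ => isOpen_Iio) fun _ hy => hy
  have hfull : ∀ᵐ y ∂μ, y ∈ s \ U := by
    rw [ae_iff]
    refine measure_mono_null (fun y hy => ?_) (measure_union_null hU (ae_iff.1 h))
    by_cases hyU : y ∈ U
    · exact Or.inl hyU
    · exact Or.inr fun hys => hy ⟨hys, hyU⟩
  obtain ⟨c, hc⟩ := hfull.exists
  refine ⟨c, (prob_compl_eq_zero_iff (measurableSet_singleton c)).1
    (measure_mono_null ?_ (ae_iff.1 hfull))⟩
  intro y hy hyt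
  exact hy (subsingleton_sdiff_biUnion_Iio s hyt hc)

lemma antitone_measureReal_Ici [IsFiniteMeasure μ] : Antitone fun y => μ.real (Ici y) :=
  fun _ _ h => measureReal_mono (Ici_subset_Ici.2 h)

lemma measureReal_Iio_eq_one_sub [IsProbabilityMeasure μ] (c : ℝ) :
    μ.real (Iio c) = 1 - μ.real (Ici c) := by
  rw [← compl_Ici, probReal_compl_eq_one_sub measurableSet_Ici]

lemma integrable_measureReal_Ici_sub_sq [IsProbabilityMeasure μ] :
    Integrable (fun y => μ.real (Ici y) - μ.real (Ici y) ^ 2) μ :=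
  .of_mem_Icc 0 1
    (antitone_measureReal_Ici.measurable.sub (antitone_measureReal_Ici.measurable.pow_const 2)
      ).aemeasurable (ae_of_all _ fun _ => sub_sq_mem_Icc measureReal_mem_Icc)

lemma integrable_measureReal_Ici_sq [IsProbabilityMeasure μ] :
    Integrable (fun y => μ.real (Ici y) ^ 2) μ :=
  .of_mem_Icc 0 1 (antitone_measureReal_Ici.measurable.pow_const 2).aemeasurable
    (ae_of_all _ fun _ => sq_mem_Icc measureReal_mem_Icc)

lemma integral_measureReal_Ici_sub_sq_ne_zero [IsProbabilityMeasure μ]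
    (h : ¬ ∃ c, μ {c} = 1) : ∫ y, (μ.real (Ici y) - μ.real (Ici y) ^ 2) ∂μ ≠ 0 := by
  intro h0
  refine h (exists_measure_singleton_eq_one_of_ae_measure_Iio_eq_zero ?_)
  have hG := (integral_eq_zero_iff_of_nonneg (fun _ => (sub_sq_mem_Icc measureReal_mem_Icc).1)
    integrable_measureReal_Ici_sub_sq).1 h0
  filter_upwards [hG, ae_measure_Ici_ne_zero μ] with y hy hne
  have hone : μ.real (Ici y) = 1 := by
    have : μ.real (Ici y) * (1 - μ.real (Ici y)) = 0 := by
      simp only [Pi.zero_apply] at hy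
      linear_combination hy
    rcases mul_eq_zero.1 this with h | h
    · exact absurd h ((measureReal_eq_zero_iff).not.2 hne)
    · linarith
  rw [← measureReal_eq_zero_iff, measureReal_Iio_eq_one_sub, hone, sub_self]

lemma integral_ite_le [IsFiniteMeasure μ] (c : ℝ) :
    ∫ y, (if c ≤ y then (1 : ℝ) else 0) ∂μ = μ.real (Ici c) := by
  rw [← integral_indicator_one measurableSet_Ici]
  rfl

lemma integral_ite_lt [IsFiniteMeasure μ] (c : ℝ) :
    ∫ y, (if y < c then (1 : ℝ) else 0) ∂μ = μ.real (Iio c) := by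
  rw [← integral_indicator_one measurableSet_Iio]
  rfl

lemma integral_add_mul_ite_le [IsProbabilityMeasure μ] (c u v : ℝ) :
    ∫ y, (u + v * (if c ≤ y then 1 else 0)) ∂μ = u + v * μ.real (Ici c) := by
  have hind : Integrable (fun y => if c ≤ y then (1 : ℝ) else 0) μ :=
    (integrable_const (1 : ℝ)).indicator measurableSet_Ici
  rw [integral_add (integrable_const u) (hind.const_mul v), integral_const, integral_const_mul,
    integral_ite_le]
  simp

lemma integral_integral_integral_ite_lt_and_le [IsProbabilityMeasure μ] :
    ∫ y₁, ∫ y₂, ∫ y₃, (if y₁ < y₂ ∧ y₂ ≤ y₃ then (1 : ℝ) else 0) ∂μ ∂μ ∂μ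
      = ∫ y, (μ.real (Ici y) - μ.real (Ici y) ^ 2) ∂μ := by
  have hinner : ∀ y₁ y₂, ∫ y₃, (if y₁ < y₂ ∧ y₂ ≤ y₃ then (1 : ℝ) else 0) ∂μ
      = (if y₁ < y₂ then 1 else 0) * μ.real (Ici y₂) := by
    intro y₁ y₂
    by_cases h : y₁ < y₂ <;> simp [h, integral_ite_le]
  simp_rw [hinner]
  have hm : Measurable fun p : ℝ × ℝ => (if p.1 < p.2 then (1 : ℝ) else 0) * μ.real (Ici p.2) :=
    (Measurable.ite (measurableSet_lt measurable_fst measurable_snd) measurable_const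
      measurable_const).mul (antitone_measureReal_Ici.measurable.comp measurable_snd)
  rw [integral_integral_swap (.of_bound hm.aestronglyMeasurable 1 (ae_of_all _ fun p => ?_))]
  · refine integral_congr_ae (ae_of_all _ fun y => ?_)
    dsimp only
    rw [integral_mul_const, integral_ite_lt, measureReal_Iio_eq_one_sub]
    ring
  · obtain ⟨y₁, y₂⟩ := p
    by_cases h : y₁ < y₂ <;> simp [h, abs_of_nonneg, measureReal_le_one]

lemma integral_integral_ite_min_lt_and_le_max [IsProbabilityMeasure μ] (y₃ : ℝ) :
    ∫ y₁, ∫ y₂, (if min y₁ y₂ < y₃ ∧ y₃ ≤ max y₁ y₂ then (1 : ℝ) else 0) ∂μ ∂μ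
      = 2 * (μ.real (Ici y₃) - μ.real (Ici y₃) ^ 2) := by
  simp_rw [ite_min_lt_and_le_max, integral_add_mul_ite_le]
  have hswap : ∀ y₁, (if y₃ ≤ y₁ then 1 else 0) + (1 - 2 * (if y₃ ≤ y₁ then 1 else 0))
      * μ.real (Ici y₃) = μ.real (Ici y₃) + (1 - 2 * μ.real (Ici y₃)) * (if y₃ ≤ y₁ then 1 else 0) :=
    fun _ => by ring
  simp_rw [hswap, integral_add_mul_ite_le]
  ring

end Real

section Kernel

variable {α : Type*} [MeasurableSpace α]

lemma measurable_measureReal_Ici (κ : Kernel α ℝ) [IsSFiniteKernel κ] :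
    Measurable fun p : α × ℝ => (κ p.1).real (Ici p.2) :=
  (Kernel.measurable_kernel_prodMk_left (κ := Kernel.prodMkRight ℝ κ)
    (measurableSet_le measurable_fst.snd measurable_snd)).ennreal_toReal

lemma integral_measureReal_eq_bind (μ : Measure α) (κ : Kernel α ℝ) [IsFiniteKernel κ]
    {s : Set ℝ} (hs : MeasurableSet s) : ∫ x, (κ x).real s ∂μ = (μ.bind κ).real s := by
  simp only [measureReal_def]
  rw [Measure.bind_apply hs κ.aemeasurable,
    integral_toReal (κ.measurable_coe hs).aemeasurable (ae_of_all _ fun _ => measure_lt_top _ _)]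

lemma integral_measureReal_sub_sq (μ : Measure α) [IsFiniteMeasure μ] (κ : Kernel α ℝ)
    [IsMarkovKernel κ] {s : Set ℝ} (hs : MeasurableSet s) :
    ∫ x, ((κ x).real s - (κ x).real s ^ 2) ∂μ = (μ.bind κ).real s - ∫ x, (κ x).real s ^ 2 ∂μ := by
  have hm : Measurable fun x => (κ x).real s := (κ.measurable_coe hs).ennreal_toReal
  rw [integral_sub (.of_mem_Icc 0 1 hm.aemeasurable (ae_of_all _ fun _ => measureReal_mem_Icc))
    (.of_mem_Icc 0 1 (hm.pow_const 2).aemeasurable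
      (ae_of_all _ fun _ => sq_mem_Icc measureReal_mem_Icc)), integral_measureReal_eq_bind μ κ hs]

lemma integrable_integral_measureReal_Ici_sq (μ : Measure α) [IsFiniteMeasure μ]
    (κ : Kernel α ℝ) [IsMarkovKernel κ] (ρ : Measure ℝ) [IsFiniteMeasure ρ] :
    Integrable (fun y => ∫ x, (κ x).real (Ici y) ^ 2 ∂μ) ρ :=
  Integrable.integral_prod_right (f := fun p : α × ℝ => (κ p.1).real (Ici p.2) ^ 2) <|
    .of_mem_Icc 0 1 ((measurable_measureReal_Ici κ).pow_const 2).aemeasurable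
      (ae_of_all _ fun _ => sq_mem_Icc measureReal_mem_Icc)

lemma integral_kernel_ite_min_lt_and_le_max (μ : Measure α) [IsFiniteMeasure μ]
    (κ : Kernel α ℝ) [IsMarkovKernel κ] (ρ : Measure ℝ) [IsFiniteMeasure ρ] :
    ∫ x, ∫ y₁, ∫ y₂, ∫ y₃, (if min y₁ y₂ < y₃ ∧ y₃ ≤ max y₁ y₂ then (1 : ℝ) else 0)
        ∂ρ ∂(κ x) ∂(κ x) ∂μ
      = ∫ y, ∫ x, 2 * ((κ x).real (Ici y) - (κ x).real (Ici y) ^ 2) ∂μ ∂ρ := by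
  have hm : Measurable fun p : ℝ × ℝ × ℝ =>
      if min p.1 p.2.1 < p.2.2 ∧ p.2.2 ≤ max p.1 p.2.1 then (1 : ℝ) else 0 :=
    .ite ((measurableSet_lt (measurable_fst.min measurable_snd.fst) measurable_snd.snd).inter
      (measurableSet_le measurable_snd.snd (measurable_fst.max measurable_snd.fst)))
      measurable_const measurable_const
  have hx : ∀ x, ∫ y₁, ∫ y₂, ∫ y₃, (if min y₁ y₂ < y₃ ∧ y₃ ≤ max y₁ y₂ then (1 : ℝ) else 0)
      ∂ρ ∂(κ x) ∂(κ x) = ∫ y, 2 * ((κ x).real (Ici y) - (κ x).real (Ici y) ^ 2) ∂ρ := fun x => by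
    rw [integral_integral_integral_rotate hm (C := 1) fun _ _ _ => by split_ifs <;> simp]
    simp_rw [integral_integral_ite_min_lt_and_le_max]
  simp_rw [hx]
  have hp := measurable_measureReal_Ici κ
  refine integral_integral_swap (.of_bound
    ((hp.sub (hp.pow_const 2)).const_mul 2).aestronglyMeasurable 2 (ae_of_all _ fun p => ?_))
  have := sub_sq_mem_Icc (measureReal_mem_Icc (μ := κ p.1) (s := Ici p.2))
  simp only [Function.uncurry, norm_mul, Real.norm_ofNat, Real.norm_eq_abs, abs_of_nonneg this.1]
  linarith [this.2]

end Kernel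

/-- If `Y` is not almost surely constant, then the Dette–Siburg–Stoimenov measure of dependence
`ξ` satisfies `ξ = 1 − μ₁/(2μ₂)`, where `μ₁ = P(Y₁ ∧ Y₂ < Y₃ ≤ Y₁ ∨ Y₂ | X₁ = X₂)` and
`μ₂ = P(Y₁ < Y₂ ≤ Y₃)`.  Here `μX` is the law of `X`, `κ x` the conditional law of `Y` given
`X = x`, and `μY` the marginal law of `Y`; conditioning on `{X₁ = X₂}` is interpreted by
mixing over the common value of `X`. -/
theorem stmt_8 (μX : Measure ℝ) [IsProbabilityMeasure μX]
    (κ : Kernel ℝ ℝ) [IsMarkovKernel κ]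
    (μY : Measure ℝ) (hμY : μY = μX.bind (fun x => κ x))
    (hYnc : ¬ ∃ c : ℝ, μY {c} = 1) :
    (∫ y, ((∫ x, ((κ x (Set.Ici y)).toReal) ^ 2 ∂μX) -
          (∫ x, (κ x (Set.Ici y)).toReal ∂μX) ^ 2) ∂μY) /
      (∫ y, ((μY (Set.Ici y)).toReal - ((μY (Set.Ici y)).toReal) ^ 2) ∂μY)
    = 1 -
      (∫ x, ∫ y₁, ∫ y₂, ∫ y₃,
          (if min y₁ y₂ < y₃ ∧ y₃ ≤ max y₁ y₂ then (1 : ℝ) else 0) ∂μY ∂(κ x) ∂(κ x) ∂μX) /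
        (2 * ∫ y₁, ∫ y₂, ∫ y₃, (if y₁ < y₂ ∧ y₂ ≤ y₃ then (1 : ℝ) else 0) ∂μY ∂μY ∂μY) := by
  have : IsProbabilityMeasure μY := hμY ▸ inferInstance
  simp only [← measureReal_def]
  have hG : ∀ y, ∫ x, (κ x).real (Ici y) ∂μX = μY.real (Ici y) := fun y => by
    rw [hμY, integral_measureReal_eq_bind μX κ measurableSet_Ici]
  have hinner : ∀ y, ∫ x, 2 * ((κ x).real (Ici y) - (κ x).real (Ici y) ^ 2) ∂μX
      = 2 * ((μY.real (Ici y) - μY.real (Ici y) ^ 2)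
        - ((∫ x, (κ x).real (Ici y) ^ 2 ∂μX) - μY.real (Ici y) ^ 2)) := fun y => by
    rw [integral_const_mul, integral_measureReal_sub_sq μX κ measurableSet_Ici, ← hμY]
    ring
  have hN : Integrable (fun y => (∫ x, (κ x).real (Ici y) ^ 2 ∂μX) - μY.real (Ici y) ^ 2) μY :=
    (integrable_integral_measureReal_Ici_sq μX κ μY).sub integrable_measureReal_Ici_sq
  simp_rw [hG]
  rw [integral_kernel_ite_min_lt_and_le_max, integral_integral_integral_ite_lt_and_le]
  simp_rw [hinner]
  rw [integral_const_mul, integral_sub integrable_measureReal_Ici_sub_sq hN]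
  have hD := integral_measureReal_Ici_sub_sq_ne_zero hYnc
  set D := ∫ y, (μY.real (Ici y) - μY.real (Ici y) ^ 2) ∂μY
  set N := ∫ y, ((∫ x, (κ x).real (Ici y) ^ 2 ∂μX) - μY.real (Ici y) ^ 2) ∂μY
  field_simp
  ring
end

section
/- Let μ and ν be finite signed measures on a measurable space and f a bounded measurable function on the r-fold product. Then for r ∈ ℕ and a small real t, (μ + tν)^{⊗r}(f) = μ^{⊗r}(f) + t·∑_{j=1}^r (μ^{⊗(j−1)} ⊗ ν ⊗ μ^{⊗(r−j)})(f) + O(t²), where the O(t²) term is bounded by t²·2^r·‖f‖_∞·(‖μ‖ + ‖ν‖)^r. -/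
open MeasureTheory Finset

/-- Integral of a bounded function against the product of finite signed measures,
defined through the Jordan decompositions of the factors. -/
noncomputable def signedPiIntegral {α : Type*} [MeasurableSpace α] {r : ℕ}
    (ss : Fin r → SignedMeasure α) (f : (Fin r → α) → ℝ) : ℝ :=
  ∑ ε : Fin r → Bool,
    ((-1 : ℝ) ^ (Finset.univ.filter (fun i => ε i = false)).card) *
      ∫ x, f x ∂(Measure.pi fun i =>
        if ε i then (ss i).toJordanDecomposition.posPart
        else (ss i).toJordanDecomposition.negPart)

/-- Total variation norm of a finite signed measure. -/
noncomputable def tvNorm {α : Type*} [MeasurableSpace α] (s : SignedMeasure α) : ℝ :=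
  (s.totalVariation Set.univ).toReal

/-! Fix one factor `j`. Pairing every sign pattern `ε` having `ε j = true` with the pattern
flipped at `j` writes `signedPiIntegral` as a signed sum of `Φ (s⁺) - Φ (s⁻)`, where `s = ss j`
and `Φ κ` integrates `f` against a product of finite measures with `κ` in slot `j`. Such a `Φ`
is additive and `ℝ≥0`-homogeneous in `κ`, so `Φ (s⁺) - Φ (s⁻)` is linear in `s`: it equals
`Φ P - Φ N` for every representation `s = P - N`. Hence `signedPiIntegral` is multilinear, and
the first-order Taylor expansion of a multilinear map leaves as remainder the terms with at least
two factors `t • ν`; each of the at most `2 ^ r` of them is bounded by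
`t ^ 2 ‖f‖_∞ (‖μ‖ + ‖ν‖) ^ r`. -/

open Function
open scoped NNReal

theorem Finset.sum_eq_sum_filter_add_update {ι M : Type*} [Fintype ι] [DecidableEq ι]
    [AddCommMonoid M] (j : ι) (g : (ι → Bool) → M) :
    ∑ ε, g ε = ∑ ε with ε j = true, (g ε + g (update ε j false)) := by
  rw [sum_add_distrib, ← sum_filter_add_sum_filter_not univ (fun ε => ε j = true)]
  congr 1
  refine sum_nbij' (update · j true) (update · j false) ?_ ?_ ?_ ?_ ?_ <;> intro ε hε
  all_goals simp_all
  rw [← hε, update_eq_self]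

namespace MeasureTheory

section JordanExtension

variable {α : Type*} [MeasurableSpace α] {Φ : Measure α → ℝ}

noncomputable def jordanExtension (Φ : Measure α → ℝ) (s : SignedMeasure α) : ℝ :=
  Φ s.toJordanDecomposition.posPart - Φ s.toJordanDecomposition.negPart

theorem jordanExtension_eq_sub
    (hadd : ∀ (κ₁ κ₂ : Measure α) [IsFiniteMeasure κ₁] [IsFiniteMeasure κ₂],
      Φ (κ₁ + κ₂) = Φ κ₁ + Φ κ₂)
    {P N : Measure α} [IsFiniteMeasure P] [IsFiniteMeasure N]
    {s : SignedMeasure α} (hs : s = P.toSignedMeasure - N.toSignedMeasure) :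
    jordanExtension Φ s = Φ P - Φ N := by
  have h : s.toJordanDecomposition.posPart + N = P + s.toJordanDecomposition.negPart := by
    rw [← Measure.toSignedMeasure_eq_toSignedMeasure_iff, Measure.toSignedMeasure_add,
      Measure.toSignedMeasure_add, ← sub_eq_sub_iff_add_eq_add, ← hs]
    exact s.toSignedMeasure_toJordanDecomposition
  have := congrArg Φ h
  rw [hadd, hadd] at this
  rw [jordanExtension]
  linarith

theorem jordanExtension_add
    (hadd : ∀ (κ₁ κ₂ : Measure α) [IsFiniteMeasure κ₁] [IsFiniteMeasure κ₂],
      Φ (κ₁ + κ₂) = Φ κ₁ + Φ κ₂)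
    (a b : SignedMeasure α) :
    jordanExtension Φ (a + b) = jordanExtension Φ a + jordanExtension Φ b := by
  rw [jordanExtension_eq_sub hadd
    (P := a.toJordanDecomposition.posPart + b.toJordanDecomposition.posPart)
    (N := a.toJordanDecomposition.negPart + b.toJordanDecomposition.negPart)]
  · simp only [jordanExtension, hadd]; ring
  · conv_lhs =>
      rw [← a.toSignedMeasure_toJordanDecomposition, ← b.toSignedMeasure_toJordanDecomposition]
    simp only [JordanDecomposition.toSignedMeasure, Measure.toSignedMeasure_add]
    abel

theorem jordanExtension_smul
    (hadd : ∀ (κ₁ κ₂ : Measure α) [IsFiniteMeasure κ₁] [IsFiniteMeasure κ₂],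
      Φ (κ₁ + κ₂) = Φ κ₁ + Φ κ₂)
    (hsmul : ∀ (c : ℝ≥0) (κ : Measure α) [IsFiniteMeasure κ], Φ (c • κ) = c * Φ κ)
    (c : ℝ) (s : SignedMeasure α) :
    jordanExtension Φ (c • s) = c * jordanExtension Φ s := by
  set P := s.toJordanDecomposition.posPart
  set N := s.toJordanDecomposition.negPart
  have hc : (c.toNNReal : ℝ) - (-c).toNNReal = c := by simp
  rw [jordanExtension_eq_sub hadd (P := c.toNNReal • P + (-c).toNNReal • N)
    (N := c.toNNReal • N + (-c).toNNReal • P)]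
  · simp only [jordanExtension, hadd, hsmul]
    linear_combination (Φ P - Φ N) * hc
  · conv_lhs => rw [← s.toSignedMeasure_toJordanDecomposition, ← hc]
    simp only [JordanDecomposition.toSignedMeasure, Measure.toSignedMeasure_add,
      Measure.toSignedMeasure_smul, NNReal.smul_def]
    module

end JordanExtension

section PiUpdate

variable {ι : Type*} [Fintype ι] [DecidableEq ι] {α : ι → Type*} [∀ i, MeasurableSpace (α i)]
  {m : ∀ i, Measure (α i)} {j : ι}

theorem prod_apply_update_measure (κ : Measure (α j)) (s : ∀ i, Set (α i)) :
    ∏ i, update m j κ i (s i) = κ (s j) * ∏ i ∈ univ \ {j}, m i (s i) := by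
  rw [← prod_update_of_mem (mem_univ j)]
  exact prod_congr rfl fun i _ => apply_update (fun i (μ : Measure (α i)) => μ (s i)) m j κ i

variable [∀ i, IsFiniteMeasure (m i)]

instance isFiniteMeasure_update {κ : Measure (α j)} [IsFiniteMeasure κ] (i : ι) :
    IsFiniteMeasure (update m j κ i) := by
  rcases eq_or_ne i j with rfl | h
  · rwa [update_self]
  · rw [update_of_ne h]; infer_instance

theorem Measure.pi_update_add (κ₁ κ₂ : Measure (α j)) [IsFiniteMeasure κ₁]
    [IsFiniteMeasure κ₂] :
    Measure.pi (update m j (κ₁ + κ₂)) =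
      Measure.pi (update m j κ₁) + Measure.pi (update m j κ₂) :=
  Measure.pi_eq fun s _ => by
    simp only [Measure.add_apply, Measure.pi_pi, prod_apply_update_measure, add_mul]

theorem Measure.pi_update_smul (c : ℝ≥0) (κ : Measure (α j)) [IsFiniteMeasure κ] :
    Measure.pi (update m j (c • κ)) = c • Measure.pi (update m j κ) :=
  Measure.pi_eq fun s _ => by
    simp only [Measure.smul_apply, Measure.pi_pi, prod_apply_update_measure, smul_mul_assoc]

variable {f : (∀ i, α i) → ℝ} {C : ℝ}

theorem integral_pi_update_add (hf : Measurable f) (hC : ∀ x, |f x| ≤ C)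
    (κ₁ κ₂ : Measure (α j)) [IsFiniteMeasure κ₁] [IsFiniteMeasure κ₂] :
    ∫ x, f x ∂Measure.pi (update m j (κ₁ + κ₂)) =
      ∫ x, f x ∂Measure.pi (update m j κ₁) + ∫ x, f x ∂Measure.pi (update m j κ₂) := by
  have hint : ∀ (μ : Measure (∀ i, α i)) [IsFiniteMeasure μ], Integrable f μ := fun μ _ =>
    .of_bound hf.aestronglyMeasurable C (.of_forall hC)
  rw [Measure.pi_update_add, integral_add_measure (hint _) (hint _)]

theorem integral_pi_update_smul (c : ℝ≥0) (κ : Measure (α j)) [IsFiniteMeasure κ] :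
    ∫ x, f x ∂Measure.pi (update m j (c • κ)) = c * ∫ x, f x ∂Measure.pi (update m j κ) := by
  rw [Measure.pi_update_smul, integral_smul_nnreal_measure, NNReal.smul_def, smul_eq_mul]

end PiUpdate

end MeasureTheory

section SignedPiIntegral

variable {α : Type*} [MeasurableSpace α] {r : ℕ}

noncomputable def MeasureTheory.SignedMeasure.jordanPart (b : Bool) (s : SignedMeasure α) :
    Measure α :=
  if b then s.toJordanDecomposition.posPart else s.toJordanDecomposition.negPart

instance MeasureTheory.SignedMeasure.isFiniteMeasure_jordanPart (b : Bool)
    (s : SignedMeasure α) : IsFiniteMeasure (s.jordanPart b) := by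
  cases b
  · exact inferInstanceAs (IsFiniteMeasure s.toJordanDecomposition.negPart)
  · exact inferInstanceAs (IsFiniteMeasure s.toJordanDecomposition.posPart)

@[simp]
theorem MeasureTheory.SignedMeasure.jordanPart_true (s : SignedMeasure α) :
    s.jordanPart true = s.toJordanDecomposition.posPart :=
  rfl

@[simp]
theorem MeasureTheory.SignedMeasure.jordanPart_false (s : SignedMeasure α) :
    s.jordanPart false = s.toJordanDecomposition.negPart :=
  rfl

def boolSign {ι : Type*} [Fintype ι] (ε : ι → Bool) : ℝ := (-1) ^ #{i | ε i = false}

theorem boolSign_update_false {ι : Type*} [Fintype ι] [DecidableEq ι] {ε : ι → Bool} {j : ι}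
    (hj : ε j = true) : boolSign (update ε j false) = -boolSign ε := by
  have h : univ.filter (update ε j false · = false) = insert j (univ.filter (ε · = false)) := by
    ext i
    rcases eq_or_ne i j with rfl | hi <;> simp [*]
  rw [boolSign, boolSign, h, card_insert_of_notMem (by simp [hj]), pow_succ, mul_neg_one]

theorem signedPiIntegral_eq (ss : Fin r → SignedMeasure α) (f : (Fin r → α) → ℝ) :
    signedPiIntegral ss f =
      ∑ ε, boolSign ε * ∫ x, f x ∂Measure.pi fun i => (ss i).jordanPart (ε i) :=
  rfl

theorem jordanPart_update_update (ss : Fin r → SignedMeasure α) (ε : Fin r → Bool) (j : Fin r)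
    (s : SignedMeasure α) (b : Bool) :
    (fun i => (update ss j s i).jordanPart (update ε j b i)) =
      update (fun i => (ss i).jordanPart (ε i)) j (s.jordanPart b) := by
  funext i
  rcases eq_or_ne i j with rfl | h
  · simp only [update_self]
  · simp only [update_of_ne h]

theorem signedPiIntegral_update (ss : Fin r → SignedMeasure α) (f : (Fin r → α) → ℝ)
    (j : Fin r) (s : SignedMeasure α) :
    signedPiIntegral (update ss j s) f = ∑ ε with ε j = true, boolSign ε * jordanExtension
      (fun κ => ∫ x, f x ∂Measure.pi (update (fun i => (ss i).jordanPart (ε i)) j κ)) s := by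
  rw [signedPiIntegral_eq, sum_eq_sum_filter_add_update j]
  refine sum_congr rfl fun ε hε => ?_
  replace hε : ε j = true := (mem_filter.1 hε).2
  have hpos := jordanPart_update_update ss ε j s (ε j)
  rw [update_eq_self, hε] at hpos
  rw [hpos, jordanPart_update_update, boolSign_update_false hε, jordanExtension,
    SignedMeasure.jordanPart_true, SignedMeasure.jordanPart_false]
  ring

variable {f : (Fin r → α) → ℝ} {C : ℝ}

theorem signedPiIntegral_update_add (hf : Measurable f) (hC : ∀ x, |f x| ≤ C)
    (ss : Fin r → SignedMeasure α) (j : Fin r) (a b : SignedMeasure α) :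
    signedPiIntegral (update ss j (a + b)) f =
      signedPiIntegral (update ss j a) f + signedPiIntegral (update ss j b) f := by
  simp only [signedPiIntegral_update, ← sum_add_distrib, ← mul_add]
  refine sum_congr rfl fun ε _ => ?_
  rw [jordanExtension_add fun κ₁ κ₂ _ _ => integral_pi_update_add hf hC κ₁ κ₂]

theorem signedPiIntegral_update_smul (hf : Measurable f) (hC : ∀ x, |f x| ≤ C)
    (ss : Fin r → SignedMeasure α) (j : Fin r) (c : ℝ) (a : SignedMeasure α) :
    signedPiIntegral (update ss j (c • a)) f = c * signedPiIntegral (update ss j a) f := by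
  simp only [signedPiIntegral_update, mul_sum]
  refine sum_congr rfl fun ε _ => ?_
  rw [jordanExtension_smul (fun κ₁ κ₂ _ _ => integral_pi_update_add hf hC κ₁ κ₂)
    fun c κ _ => integral_pi_update_smul (f := f) c κ]
  ring

noncomputable def signedPiIntegralMultilinear (hf : Measurable f) (hC : ∀ x, |f x| ≤ C) :
    MultilinearMap ℝ (fun _ : Fin r => SignedMeasure α) ℝ where
  toFun ss := signedPiIntegral ss f
  map_update_add' _ _ _ _ := by convert signedPiIntegral_update_add hf hC _ _ _ _
  map_update_smul' _ _ _ _ := by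
    rw [smul_eq_mul]
    convert signedPiIntegral_update_smul hf hC _ _ _ _

@[simp]
theorem signedPiIntegralMultilinear_apply (hf : Measurable f) (hC : ∀ x, |f x| ≤ C)
    (ss : Fin r → SignedMeasure α) :
    signedPiIntegralMultilinear hf hC ss = signedPiIntegral ss f :=
  rfl

theorem tvNorm_eq_sum_jordanPart (s : SignedMeasure α) :
    tvNorm s = ∑ b, (s.jordanPart b).real Set.univ := by
  rw [tvNorm, SignedMeasure.totalVariation, Measure.add_apply,
    ENNReal.toReal_add (measure_ne_top _ _) (measure_ne_top _ _), Fintype.sum_bool]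
  rfl

theorem abs_signedPiIntegral_le (hC : ∀ x, |f x| ≤ C) (ss : Fin r → SignedMeasure α) :
    |signedPiIntegral ss f| ≤ C * ∏ i, tvNorm (ss i) := by
  have hterm : ∀ ε : Fin r → Bool,
      |boolSign ε * ∫ x, f x ∂Measure.pi fun i => (ss i).jordanPart (ε i)| ≤
        C * ∏ i, ((ss i).jordanPart (ε i)).real Set.univ := fun ε => by
    rw [abs_mul, boolSign, abs_pow, abs_neg, abs_one, one_pow, one_mul, ← Real.norm_eq_abs]
    refine (norm_integral_le_of_norm_le_const (.of_forall hC)).trans_eq ?_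
    simp only [measureReal_def, Measure.pi_univ, ENNReal.toReal_prod]
  calc |signedPiIntegral ss f|
      ≤ ∑ ε : Fin r → Bool, C * ∏ i, ((ss i).jordanPart (ε i)).real Set.univ :=
        (abs_sum_le_sum_abs _ _).trans (sum_le_sum fun ε _ => hterm ε)
    _ = C * ∏ i, tvNorm (ss i) := by
        simp only [← mul_sum, tvNorm_eq_sum_jordanPart, Fintype.prod_sum]

theorem tvNorm_nonneg (s : SignedMeasure α) : 0 ≤ tvNorm s := ENNReal.toReal_nonneg

theorem tvNorm_of_isEmpty [IsEmpty α] (s : SignedMeasure α) : tvNorm s = 0 := by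
  simp [tvNorm, Set.univ_eq_empty_iff.2 ‹_›]

theorem abs_signedPiIntegral_piecewise_le (hC : ∀ x, |f x| ≤ C) (μ ν : SignedMeasure α)
    (S : Finset (Fin r)) :
    |signedPiIntegral (S.piecewise (fun _ => ν) (fun _ => μ)) f| ≤
      C * (tvNorm μ + tvNorm ν) ^ r := by
  refine (abs_signedPiIntegral_le hC _).trans ?_
  rcases isEmpty_or_nonempty (Fin r → α) with hα | ⟨⟨x⟩⟩
  · -- both sides vanish: `Fin r → α` can only be empty if `α` is and `r ≠ 0`
    obtain ⟨i⟩ : Nonempty (Fin r) := by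
      by_contra h
      exact hα.false (fun i => (not_nonempty_iff.1 h).elim i)
    have : IsEmpty α := ⟨fun a => hα.false fun _ => a⟩
    simp [tvNorm_of_isEmpty, zero_pow (Fin.pos i).ne']
  · have hC0 : 0 ≤ C := (abs_nonneg _).trans (hC x)
    rw [← Fin.prod_const]
    gcongr with i
    · exact fun i _ => tvNorm_nonneg _
    · by_cases hi : i ∈ S <;> simp [hi, tvNorm_nonneg]

theorem signedPiIntegral_add_smul_sub (hf : Measurable f) (hC : ∀ x, |f x| ≤ C)
    (μ ν : SignedMeasure α) (t : ℝ) :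
    signedPiIntegral (fun _ => μ + t • ν) f - signedPiIntegral (fun _ => μ) f -
        t * ∑ j, signedPiIntegral (fun i => if i = j then ν else μ) f =
      ∑ S : Finset (Fin r) with 2 ≤ #S,
        t ^ #S * signedPiIntegral (S.piecewise (fun _ => ν) (fun _ => μ)) f := by
  let T := signedPiIntegralMultilinear hf hC
  have hlin : ∀ j, T (update (fun _ => μ) j (t • ν)) =
      t * signedPiIntegral (fun i => if i = j then ν else μ) f := fun j => by
    rw [T.map_update_smul, smul_eq_mul, signedPiIntegralMultilinear_apply]
    congr 2
    funext i
    exact update_apply _ j ν i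
  have hquad : ∀ S : Finset (Fin r), T (S.piecewise (fun _ => t • ν) (fun _ => μ)) =
      t ^ #S * signedPiIntegral (S.piecewise (fun _ => ν) (fun _ => μ)) f := fun S => by
    rw [← prod_const, ← smul_eq_mul, ← signedPiIntegralMultilinear_apply hf hC,
      ← T.map_piecewise_smul]
    congr 1
    funext i
    by_cases hi : i ∈ S <;> simp [hi]
  have hexp := T.map_add_eq_map_add_linearDeriv_add (fun _ => μ) (fun _ => t • ν)
  simp only [MultilinearMap.linearDeriv_apply, hlin, hquad, ← mul_sum] at hexp
  change signedPiIntegral (fun _ => μ + t • ν) f =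
    signedPiIntegral (fun _ => μ) f + _ + _ at hexp
  rw [hexp]
  ring

end SignedPiIntegral

/-- First-order expansion of `P ↦ P^{⊗r}`:
`(μ + tν)^{⊗r}(f) = μ^{⊗r}(f) + t ∑_j (μ^{⊗(j−1)} ⊗ ν ⊗ μ^{⊗(r−j)})(f) + O(t²)`,
with the second-order term bounded by `t² 2^r ‖f‖_∞ (‖μ‖ + ‖ν‖)^r`. -/
theorem stmt_12 {α : Type*} [MeasurableSpace α] (r : ℕ)
    (μ ν : SignedMeasure α) (f : (Fin r → α) → ℝ) (hf : Measurable f)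
    (C : ℝ) (hC : ∀ x, |f x| ≤ C) (t : ℝ) (ht : |t| ≤ 1) :
    |signedPiIntegral (fun _ => μ + t • ν) f - signedPiIntegral (fun _ => μ) f -
        t * ∑ j : Fin r, signedPiIntegral (fun i => if i = j then ν else μ) f|
      ≤ t ^ 2 * 2 ^ r * C * (tvNorm μ + tvNorm ν) ^ r := by
  set K := C * (tvNorm μ + tvNorm ν) ^ r
  have hK : 0 ≤ K := (abs_nonneg _).trans (abs_signedPiIntegral_piecewise_le hC μ ν ∅)
  have hterm : ∀ S ∈ univ.filter fun S : Finset (Fin r) => 2 ≤ #S,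
      |t ^ #S * signedPiIntegral (S.piecewise (fun _ => ν) (fun _ => μ)) f| ≤ t ^ 2 * K :=
    fun S hS => by
      rw [abs_mul, abs_pow, ← sq_abs t]
      exact mul_le_mul (pow_le_pow_of_le_one (abs_nonneg t) ht (mem_filter.1 hS).2)
        (abs_signedPiIntegral_piecewise_le hC μ ν S) (abs_nonneg _) (sq_nonneg _)
  have hcard : (#(univ.filter fun S : Finset (Fin r) => 2 ≤ #S) : ℝ) ≤ 2 ^ r := by
    exact_mod_cast (card_filter_le _ _).trans_eq (by simp)
  rw [signedPiIntegral_add_smul_sub hf hC]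
  calc _ ≤ _ := abs_sum_le_sum_abs _ _
    _ ≤ _ := sum_le_sum hterm
    _ = #(univ.filter fun S : Finset (Fin r) => 2 ≤ #S) * (t ^ 2 * K) := by
        rw [sum_const, nsmul_eq_mul]
    _ ≤ 2 ^ r * (t ^ 2 * K) := by gcongr
    _ = t ^ 2 * 2 ^ r * C * (tvNorm μ + tvNorm ν) ^ r := by ring
end

section
/- Equip ℓ^∞(T)^ℕ with the metric ‖(f₁,f₂,…)‖ = ∑_{i≥1} 2^{−i}‖f_i‖_∞/(1+‖f_i‖_∞), and let D₀ be the subspace of sequences with sup_i ‖f_i‖_∞ < ∞. Fix for each s in a set T₊ a sequence (s̃₁, s̃₂, …) ∈ T^ℕ. Then the map φ : D₀ → ℓ^∞(T₊) defined by φ(f₁,f₂,…)(s) = ∑_{i≥1} 2^{−i} f_i(2^i s̃_i) is well-defined, linear, and continuous; specifically ‖φ(f)‖_∞ ≤ (1 + sup_i ‖f_i‖_∞)·‖f‖, where T is assumed closed under scalar multiplication so that 2^i s̃_i ∈ T. -/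
open Filter
set_option maxHeartbeats 1000000

lemma aux_summable {S : Type*} [NormedAddCommGroup S] [NormedSpace ℝ S] (T : Set S)
    (hT : ∀ (c : ℝ), ∀ x ∈ T, c • x ∈ T)
    (f : ℕ → S → ℝ) (B : ℕ → ℝ) (hB : ∀ i, ∀ x ∈ T, |f i x| ≤ B i)
    (hBnn : ∀ i, 0 ≤ B i) (M : ℝ) (hM : ∀ i, B i ≤ M)
    (t : ℕ → S) (ht : ∀ i, t i ∈ T) :
    Summable (fun i => ((2 : ℝ)⁻¹) ^ (i + 1) * f i (((2 : ℝ) ^ (i + 1)) • t i)) := by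
  apply Summable.of_norm
  have hg : Summable (fun i : ℕ => ((2 : ℝ)⁻¹) ^ (i + 1) * M) :=
    ((summable_geometric_of_lt_one (by norm_num) (by norm_num)).mul_right M).comp_injective
      (add_left_injective 1)
  refine Summable.of_nonneg_of_le (fun i => norm_nonneg _) ?_ hg
  intro i
  rw [Real.norm_eq_abs, abs_mul, abs_pow]
  have h1 : |f i (((2 : ℝ) ^ (i + 1)) • t i)| ≤ M :=
    le_trans (hB i _ (hT _ _ (ht i))) (hM i)
  have h2 : (0:ℝ) ≤ (2:ℝ)⁻¹ ^ (i+1) := by positivity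
  calc |(2:ℝ)⁻¹| ^ (i+1) * |f i (((2 : ℝ) ^ (i + 1)) • t i)|
      = (2:ℝ)⁻¹ ^ (i+1) * |f i (((2 : ℝ) ^ (i + 1)) • t i)| := by
        rw [abs_of_nonneg (by norm_num : (0:ℝ) ≤ (2:ℝ)⁻¹)]
    _ ≤ (2:ℝ)⁻¹ ^ (i+1) * M := mul_le_mul_of_nonneg_left h1 h2


lemma aux_abs_tsum_le (u v : ℕ → ℝ) (h : ∀ i, |u i| ≤ v i)
    (hu : Summable fun i => |u i|) (hv : Summable v) :
    |∑' i, u i| ≤ ∑' i, v i := by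
  calc |∑' i, u i| ≤ ∑' i, |u i| := by
        simpa [Real.norm_eq_abs] using norm_tsum_le_tsum_norm (f := u) hu
    _ ≤ ∑' i, v i := Summable.tsum_le_tsum h hu hv

lemma aux_linear (u v : ℕ → ℝ) (hu : Summable u) (hv : Summable v) (a b : ℝ) :
    ∑' i, (a * u i + b * v i) = a * ∑' i, u i + b * ∑' i, v i := by
  rw [Summable.tsum_add (hu.mul_left a) (hv.mul_left b), tsum_mul_left, tsum_mul_left]

/-- The map `φ(f₁,f₂,…)(s) = ∑_{i≥1} 2^{−i} f_i(2^i s̃_i)` is well defined (the series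
converges), satisfies the norm bound `‖φ(f)‖_∞ ≤ (1 + sup_i ‖f_i‖_∞)·‖f‖` with
`‖f‖ = ∑ 2^{−i} ‖f_i‖_∞/(1 + ‖f_i‖_∞)`, and is linear.  Here `T` is closed under scalar
multiplication, `t` is the chosen representing sequence `(s̃_i)` of a point of `T₊`, and
`B i` bounds `|f_i|` on `T` with `sup_i B i ≤ M`. -/
theorem stmt_15 {S : Type*} [NormedAddCommGroup S] [NormedSpace ℝ S] (T : Set S)
    (hT : ∀ (c : ℝ), ∀ x ∈ T, c • x ∈ T)
    (f : ℕ → S → ℝ) (B : ℕ → ℝ) (hB : ∀ i, ∀ x ∈ T, |f i x| ≤ B i)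
    (hBnn : ∀ i, 0 ≤ B i) (M : ℝ) (hM : ∀ i, B i ≤ M)
    (t : ℕ → S) (ht : ∀ i, t i ∈ T) :
    Summable (fun i => ((2 : ℝ)⁻¹) ^ (i + 1) * f i (((2 : ℝ) ^ (i + 1)) • t i)) ∧
    |∑' i, ((2 : ℝ)⁻¹) ^ (i + 1) * f i (((2 : ℝ) ^ (i + 1)) • t i)|
      ≤ (1 + M) * ∑' i, ((2 : ℝ)⁻¹) ^ (i + 1) * (B i / (1 + B i)) ∧
    ∀ (g : ℕ → S → ℝ), (∀ i, ∀ x ∈ T, |g i x| ≤ B i) → ∀ a b : ℝ,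
      ∑' i, ((2 : ℝ)⁻¹) ^ (i + 1) *
          (a * f i (((2 : ℝ) ^ (i + 1)) • t i) + b * g i (((2 : ℝ) ^ (i + 1)) • t i))
        = a * ∑' i, ((2 : ℝ)⁻¹) ^ (i + 1) * f i (((2 : ℝ) ^ (i + 1)) • t i)
          + b * ∑' i, ((2 : ℝ)⁻¹) ^ (i + 1) * g i (((2 : ℝ) ^ (i + 1)) • t i) := by
  have hsum := aux_summable T hT f B hB hBnn M hM t ht
  refine ⟨hsum, ?_, ?_⟩
  · -- norm bound
    have hsum2 : Summable (fun i => (1 + M) * (((2 : ℝ)⁻¹) ^ (i + 1) * (B i / (1 + B i)))) := by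
      apply Summable.mul_left
      have hg0 : Summable (fun i : ℕ => ((2 : ℝ)⁻¹) ^ (i + 1)) :=
        (summable_geometric_of_lt_one (by norm_num) (by norm_num)).comp_injective
          (add_left_injective 1)
      refine Summable.of_nonneg_of_le (fun i => ?_) (fun i => ?_) hg0
      · have := hBnn i; positivity
      · have h1 : B i / (1 + B i) ≤ 1 := by
          rw [div_le_one (by linarith [hBnn i])]; linarith
        nlinarith [pow_nonneg (by norm_num : (0:ℝ) ≤ (2:ℝ)⁻¹) (i+1), h1,
          div_nonneg (hBnn i) (by linarith [hBnn i] : (0:ℝ) ≤ 1 + B i)]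
    have habs : Summable (fun i => |((2 : ℝ)⁻¹) ^ (i + 1) * f i (((2 : ℝ) ^ (i + 1)) • t i)|) := by
      have h := hsum.norm
      simp only [Real.norm_eq_abs] at h
      exact h
    have hle : ∀ i, |((2 : ℝ)⁻¹) ^ (i + 1) * f i (((2 : ℝ) ^ (i + 1)) • t i)|
        ≤ (1 + M) * (((2 : ℝ)⁻¹) ^ (i + 1) * (B i / (1 + B i))) := by
      intro i
      have hpos : (0:ℝ) < 1 + B i := by linarith [hBnn i]
      rw [abs_mul, abs_pow, abs_of_nonneg (by norm_num : (0:ℝ) ≤ (2:ℝ)⁻¹)]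
      have h1 : |f i (((2 : ℝ) ^ (i + 1)) • t i)| ≤ B i := hB i _ (hT _ _ (ht i))
      have h2 : (0:ℝ) ≤ (2:ℝ)⁻¹ ^ (i+1) := by positivity
      have key : B i ≤ (1 + M) * (B i / (1 + B i)) := by
        rw [mul_div_assoc', le_div_iff₀ hpos]
        nlinarith [hBnn i, hM i, le_trans (hBnn 0) (hM 0)]
      calc (2:ℝ)⁻¹ ^ (i+1) * |f i (((2 : ℝ) ^ (i + 1)) • t i)|
          ≤ (2:ℝ)⁻¹ ^ (i+1) * B i := mul_le_mul_of_nonneg_left h1 h2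
        _ ≤ (2:ℝ)⁻¹ ^ (i+1) * ((1 + M) * (B i / (1 + B i))) :=
            mul_le_mul_of_nonneg_left key h2
        _ = (1 + M) * ((2:ℝ)⁻¹ ^ (i+1) * (B i / (1 + B i))) := by ring
    have h := aux_abs_tsum_le _ _ hle habs hsum2
    calc |∑' i, ((2 : ℝ)⁻¹) ^ (i + 1) * f i (((2 : ℝ) ^ (i + 1)) • t i)|
        ≤ ∑' i, (1 + M) * (((2 : ℝ)⁻¹) ^ (i + 1) * (B i / (1 + B i))) := h
      _ = (1 + M) * ∑' i, ((2 : ℝ)⁻¹) ^ (i + 1) * (B i / (1 + B i)) := tsum_mul_left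
  · intro g hg a b
    have hsumg := aux_summable T hT g B hg hBnn M hM t ht
    have h1 : ∀ i, ((2 : ℝ)⁻¹) ^ (i + 1) *
        (a * f i (((2 : ℝ) ^ (i + 1)) • t i) + b * g i (((2 : ℝ) ^ (i + 1)) • t i))
        = a * (((2 : ℝ)⁻¹) ^ (i + 1) * f i (((2 : ℝ) ^ (i + 1)) • t i))
          + b * (((2 : ℝ)⁻¹) ^ (i + 1) * g i (((2 : ℝ) ^ (i + 1)) • t i)) := fun i => by ring
    rw [tsum_congr h1]
    exact aux_linear _ _ hsum hsumg a b
end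

section
/- Let G be a distribution function on ℝ and define Λ_G((s₁,t₁),(s₂,t₂)) = G(s₁)G(t₂)[G(s₂∧t₁) − G(s₂)G(t₁)] + G(s₂)G(t₁)[G(s₁∧t₂) − G(s₁)G(t₂)] + G(s₁∧s₂)G(t₁∧t₂) − G(s₁)G(s₂)G(t₁)G(t₂). If (U_i)_{i∈ℕ} is an i.i.d. sequence with distribution function G, then Λ_G((s₁,t₁),(s₂,t₂)) equals the long-run covariance ∑_{k=−1,0,1} Cov(1(U₁ ≤ s₁, U₂ ≤ t₁), 1(U_{1+k} ≤ s₂, U_{2+k} ≤ t₂)). -/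
/-!
Each indicator `1(U_a ≤ s, U_b ≤ t)` is the indicator of a box `∏ᵢ Bᵢ` in `ℝ⁴` whose sides are
half-lines `(-∞, x]` or all of `ℝ`, and a product of two such indicators is again one, with the
sides intersected, i.e. with thresholds replaced by minima. Under the product measure the expectation
of a box indicator is the product of the probabilities of its sides, so every moment entering the
three covariances is a product of values of `G`, and the identity becomes a polynomial identity.
-/

open MeasureTheory Set

noncomputable def cdfOf (μ : Measure ℝ) (x : ℝ) : ℝ := (μ (Set.Iic x)).toReal

noncomputable def pairInd (s t : ℝ) (a b : Fin 4) (u : Fin 4 → ℝ) : ℝ :=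
  if u a ≤ s ∧ u b ≤ t then 1 else 0

noncomputable def cov4 (μ : Measure ℝ) (f g : (Fin 4 → ℝ) → ℝ) : ℝ :=
  ∫ u, f u * g u ∂(Measure.pi fun _ : Fin 4 => μ) -
    (∫ u, f u ∂(Measure.pi fun _ : Fin 4 => μ)) * ∫ u, g u ∂(Measure.pi fun _ : Fin 4 => μ)

theorem integral_indicator_one_univ_pi {ι : Type*} [Fintype ι] {Ω : ι → Type*}
    [∀ i, MeasurableSpace (Ω i)] (μ : ∀ i, Measure (Ω i)) [∀ i, SigmaFinite (μ i)]
    {S : ∀ i, Set (Ω i)} (hS : ∀ i, MeasurableSet (S i)) :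
    ∫ u, (univ.pi S).indicator 1 u ∂Measure.pi μ = ∏ i, (μ i).real (S i) := by
  rw [integral_indicator_one (.univ_pi hS), measureReal_def, Measure.pi_pi, ENNReal.toReal_prod]
  rfl

def pairBox {ι : Type*} [DecidableEq ι] (s t : ℝ) (a b : ι) (i : ι) : Set ℝ :=
  (if i = a then Iic s else univ) ∩ (if i = b then Iic t else univ)

theorem measurableSet_pairBox {ι : Type*} [DecidableEq ι] (s t : ℝ) (a b i : ι) :
    MeasurableSet (pairBox s t a b i) := by
  unfold pairBox
  split_ifs <;> measurability

theorem pairInd_eq_indicator (s t : ℝ) (a b : Fin 4) :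
    pairInd s t a b = (univ.pi (pairBox s t a b)).indicator 1 := by
  ext u
  have hmem : u ∈ univ.pi (pairBox s t a b) ↔ u a ≤ s ∧ u b ≤ t := by
    refine ⟨fun h => ⟨by simpa [pairBox] using (h a trivial).1,
      by simpa [pairBox] using (h b trivial).2⟩, fun ⟨ha, hb⟩ i _ => ⟨?_, ?_⟩⟩ <;>
      split_ifs with hi <;> simp_all
  by_cases h : u a ≤ s ∧ u b ≤ t
  · rw [pairInd, if_pos h, indicator_of_mem (hmem.2 h), Pi.one_apply]
  · rw [pairInd, if_neg h, indicator_of_notMem (mt hmem.1 h)]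

section IntegralPairInd

variable (μ : Measure ℝ) [SigmaFinite μ] (s t s' t' : ℝ) (a b a' b' : Fin 4)

theorem integral_pairInd :
    ∫ u, pairInd s t a b u ∂(Measure.pi fun _ : Fin 4 => μ) = ∏ i, μ.real (pairBox s t a b i) := by
  rw [pairInd_eq_indicator]
  exact integral_indicator_one_univ_pi _ (measurableSet_pairBox s t a b)

theorem integral_pairInd_mul_pairInd :
    ∫ u, pairInd s t a b u * pairInd s' t' a' b' u ∂(Measure.pi fun _ : Fin 4 => μ) =
      ∏ i, μ.real (pairBox s t a b i ∩ pairBox s' t' a' b' i) := by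
  have hprod : (fun u => pairInd s t a b u * pairInd s' t' a' b' u) =
      (univ.pi fun i => pairBox s t a b i ∩ pairBox s' t' a' b' i).indicator 1 := by
    rw [pi_inter_distrib, inter_indicator_one, pairInd_eq_indicator, pairInd_eq_indicator]
    rfl
  rw [hprod]
  exact integral_indicator_one_univ_pi (fun _ => μ) fun i =>
    (measurableSet_pairBox s t a b i).inter (measurableSet_pairBox s' t' a' b' i)

end IntegralPairInd

/-- `Λ_G` equals the long-run covariance
`∑_{k=−1,0,1} Cov(1(U₁ ≤ s₁, U₂ ≤ t₁), 1(U_{1+k} ≤ s₂, U_{2+k} ≤ t₂))`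
for an i.i.d. sequence with distribution function `G`. -/
theorem stmt_17 (μ : Measure ℝ) [IsProbabilityMeasure μ] (s₁ t₁ s₂ t₂ : ℝ) :
    cdfOf μ s₁ * cdfOf μ t₂ * (cdfOf μ (min s₂ t₁) - cdfOf μ s₂ * cdfOf μ t₁)
        + cdfOf μ s₂ * cdfOf μ t₁ * (cdfOf μ (min s₁ t₂) - cdfOf μ s₁ * cdfOf μ t₂)
        + cdfOf μ (min s₁ s₂) * cdfOf μ (min t₁ t₂)
        - cdfOf μ s₁ * cdfOf μ s₂ * cdfOf μ t₁ * cdfOf μ t₂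
      = cov4 μ (pairInd s₁ t₁ 1 2) (pairInd s₂ t₂ 0 1)
        + cov4 μ (pairInd s₁ t₁ 1 2) (pairInd s₂ t₂ 1 2)
        + cov4 μ (pairInd s₁ t₁ 1 2) (pairInd s₂ t₂ 2 3) := by
  simp only [cov4, integral_pairInd, integral_pairInd_mul_pairInd, Fin.prod_univ_four, pairBox,
    Fin.isValue, Fin.reduceEq, zero_ne_one, one_ne_zero, ↓reduceIte, inter_self, inter_univ,
    univ_inter, Iic_inter_Iic, measureReal_def, measure_univ, ENNReal.toReal_one, mul_one, one_mul,
    cdfOf, min_comm t₁ s₂]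
  ring
end

section
/- For any two real-valued random variables X and Y on a probability space, there exists a measurable function g : ℝ × ℝ → ℝ and a real-valued random variable U, independent of X and uniformly distributable on [0,1], such that Y = g(X, U) almost surely and (X, g(X,U)) has the same joint distribution as (X, Y). -/
open MeasureTheory ProbabilityTheory Set Filter Topology

noncomputable def qf19 (ρ : Measure (ℝ × ℝ)) (p : ℝ × ℝ) : ℝ :=
  if 0 < p.2 ∧ p.2 < 1 then sInf {y | p.2 ≤ condCDF ρ p.1 y} else 0

theorem qf19_le_iff (ρ : Measure (ℝ × ℝ)) {x u : ℝ} (h0 : 0 < u) (h1 : u < 1) (t : ℝ) :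
    qf19 ρ (x, u) ≤ t ↔ u ≤ condCDF ρ x t := by
  have hqf : qf19 ρ (x, u) = sInf {y | u ≤ condCDF ρ x y} := by
    simp [qf19, h0, h1]
  set S := {y | u ≤ condCDF ρ x y} with hS
  have hne : S.Nonempty := by
    obtain ⟨y, hy⟩ := ((tendsto_condCDF_atTop ρ x).eventually (eventually_ge_nhds h1)).exists
    exact ⟨y, hy⟩
  have hbdd : BddBelow S := by
    obtain ⟨B, hB⟩ := eventually_atBot.mp
      ((tendsto_condCDF_atBot ρ x).eventually (eventually_lt_nhds h0))
    refine ⟨B, fun y hy => ?_⟩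
    by_contra hlt
    exact absurd hy (not_le.mpr (hB y (le_of_not_ge hlt)))
  rw [hqf]
  constructor
  · intro h
    have key : ∀ y, sInf S < y → u ≤ condCDF ρ x y := by
      intro y hy
      obtain ⟨z, hzS, hz⟩ := (csInf_lt_iff hbdd hne).mp hy
      exact hzS.trans ((condCDF ρ x).mono hz.le)
    have hrc : Tendsto (condCDF ρ x) (𝓝[>] (sInf S)) (𝓝 (condCDF ρ x (sInf S))) :=
      ((condCDF ρ x).right_continuous (sInf S)).tendsto.mono_left
        (nhdsWithin_mono _ Ioi_subset_Ici_self)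
    have h1' : u ≤ condCDF ρ x (sInf S) :=
      ge_of_tendsto hrc (eventually_mem_nhdsWithin.mono fun y hy => key y hy)
    exact h1'.trans ((condCDF ρ x).mono h)
  · intro h
    exact csInf_le hbdd h

theorem qf19_measurable (ρ : Measure (ℝ × ℝ)) : Measurable (qf19 ρ) := by
  apply measurable_of_Iic
  intro t
  have hset : qf19 ρ ⁻¹' Iic t =
      ({p : ℝ × ℝ | 0 < p.2 ∧ p.2 < 1} ∩ {p : ℝ × ℝ | p.2 ≤ condCDF ρ p.1 t}) ∪
      ({p : ℝ × ℝ | 0 < p.2 ∧ p.2 < 1}ᶜ ∩ {_p : ℝ × ℝ | (0:ℝ) ≤ t}) := by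
    ext ⟨x, u⟩
    by_cases h : 0 < u ∧ u < 1
    · simp [h, qf19_le_iff ρ h.1 h.2 t]
    · simp [h, qf19, mem_preimage, mem_Iic]
  rw [hset]
  have h1 : MeasurableSet {p : ℝ × ℝ | 0 < p.2 ∧ p.2 < 1} := by
    exact (measurableSet_lt measurable_const measurable_snd).inter
      (measurableSet_lt measurable_snd measurable_const)
  have h2 : MeasurableSet {p : ℝ × ℝ | p.2 ≤ condCDF ρ p.1 t} :=
    measurableSet_le measurable_snd ((measurable_condCDF ρ t).comp measurable_fst)
  have h3 : MeasurableSet {_p : ℝ × ℝ | (0:ℝ) ≤ t} := by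
    by_cases h : (0:ℝ) ≤ t
    · simp [h]
    · simp [h]
  exact (h1.inter h2).union (h1.compl.inter h3)

theorem qf19_map_uniform (ρ : Measure (ℝ × ℝ)) (x t : ℝ) :
    volume.restrict (Icc (0:ℝ) 1) {u | qf19 ρ (x, u) ≤ t}
      = ENNReal.ofReal (condCDF ρ x t) := by
  set c := condCDF ρ x t with hc
  have hc0 : 0 ≤ c := condCDF_nonneg ρ x t
  have hc1 : c ≤ 1 := condCDF_le_one ρ x t
  have hmeas : MeasurableSet {u : ℝ | qf19 ρ (x, u) ≤ t} :=
    measurableSet_le ((qf19_measurable ρ).comp measurable_prodMk_left) measurable_const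
  rw [Measure.restrict_apply hmeas]
  apply le_antisymm
  · have hsub : {u : ℝ | qf19 ρ (x, u) ≤ t} ∩ Icc 0 1 ⊆ Ioc 0 c ∪ {0, 1} := by
      rintro u ⟨hu, hu0, hu1⟩
      rcases eq_or_lt_of_le hu0 with h0 | h0
      · exact Or.inr (Or.inl h0.symm)
      rcases eq_or_lt_of_le hu1 with h1 | h1
      · exact Or.inr (Or.inr h1)
      exact Or.inl ⟨h0, (qf19_le_iff ρ h0 h1 t).mp hu⟩
    calc volume ({u : ℝ | qf19 ρ (x, u) ≤ t} ∩ Icc 0 1) ≤ volume (Ioc 0 c ∪ {0, 1}) :=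
          measure_mono hsub
      _ ≤ volume (Ioc 0 c) + volume ({0, 1} : Set ℝ) := measure_union_le _ _
      _ = ENNReal.ofReal c := by
          have hz : volume ({0, 1} : Set ℝ) = 0 :=
            Set.Finite.measure_zero (Set.toFinite _) volume
          rw [hz]
          simp [Real.volume_Ioc, hc0]
  · have hsub : Ioo 0 c ⊆ {u : ℝ | qf19 ρ (x, u) ≤ t} ∩ Icc 0 1 := by
      rintro u ⟨h0, huc⟩
      have h1 : u < 1 := lt_of_lt_of_le huc hc1
      exact ⟨(qf19_le_iff ρ h0 h1 t).mpr huc.le, h0.le, h1.le⟩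
    calc ENNReal.ofReal c = volume (Ioo 0 c) := by simp [Real.volume_Ioo]
      _ ≤ _ := measure_mono hsub

theorem qf19_map (ρ : Measure (ℝ × ℝ)) [IsProbabilityMeasure ρ] :
    Measure.map (fun ω : ℝ × ℝ => (ω.1, qf19 ρ ω))
        (ρ.fst.prod (volume.restrict (Icc (0:ℝ) 1))) = ρ := by
  set ν : Measure ℝ := volume.restrict (Icc (0:ℝ) 1) with hν
  haveI : IsProbabilityMeasure ν := ⟨by simp [hν, Real.volume_Icc]⟩
  have hmeas : Measurable (fun ω : ℝ × ℝ => (ω.1, qf19 ρ ω)) :=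
    measurable_fst.prodMk (qf19_measurable ρ)
  haveI : IsProbabilityMeasure (Measure.map (fun ω : ℝ × ℝ => (ω.1, qf19 ρ ω))
      (ρ.fst.prod ν)) := Measure.isProbabilityMeasure_map hmeas.aemeasurable
  refine ext_of_generate_finite
    (Set.image2 (· ×ˢ ·) {s : Set ℝ | MeasurableSet s} (Set.range Iic)) ?_ ?_ ?_ ?_
  · exact (generateFrom_eq_prod MeasurableSpace.generateFrom_measurableSet
      (((borel_eq_generateFrom_Iic ℝ).symm).trans (BorelSpace.measurable_eq (α := ℝ)).symm)
      isCountablySpanning_measurableSet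
      ⟨fun n => Iic (n : ℝ), fun n => ⟨_, rfl⟩, by
        ext x; simp only [mem_iUnion, mem_Iic, mem_univ, iff_true]; exact exists_nat_ge x⟩).symm
  · exact IsPiSystem.prod MeasurableSpace.isPiSystem_measurableSet isPiSystem_Iic
  · rintro _ ⟨s, hs', _, ⟨r, rfl⟩, rfl⟩
    have hs : MeasurableSet s := hs'
    rw [Measure.map_apply hmeas (hs.prod measurableSet_Iic),
      Measure.prod_apply (hmeas (hs.prod measurableSet_Iic))]
    have hsec : ∀ x : ℝ, ν (Prod.mk x ⁻¹' ((fun ω : ℝ × ℝ => (ω.1, qf19 ρ ω)) ⁻¹'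
        s ×ˢ Iic r)) = s.indicator (fun x => ENNReal.ofReal (condCDF ρ x r)) x := by
      intro x
      by_cases hx : x ∈ s
      · rw [Set.indicator_of_mem hx]
        have : Prod.mk x ⁻¹' ((fun ω : ℝ × ℝ => (ω.1, qf19 ρ ω)) ⁻¹' s ×ˢ Iic r)
            = {u | qf19 ρ (x, u) ≤ r} := by
          ext u; simp [hx]
        rw [this, ← qf19_map_uniform ρ x r]
      · rw [Set.indicator_of_notMem hx]
        have : Prod.mk x ⁻¹' ((fun ω : ℝ × ℝ => (ω.1, qf19 ρ ω)) ⁻¹' s ×ˢ Iic r)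
            = (∅ : Set ℝ) := by
          ext u; simp [hx]
        rw [this, measure_empty]
    simp_rw [hsec]
    rw [lintegral_indicator hs (fun x => ENNReal.ofReal (condCDF ρ x r))]
    exact setLIntegral_condCDF ρ r hs
  · simp


/-- Noise representation: for any real random variables `X, Y` there exist (possibly on an
enlarged probability space) `X', Y', U` and a measurable `g` with `(X',Y') ∼ (X,Y)`,
`U` uniform on `[0,1]`, `U` independent of `X'`, and `Y' = g(X',U)` a.s. -/
theorem stmt_19 {Ω : Type} [MeasurableSpace Ω] (P : Measure Ω) [IsProbabilityMeasure P]
    (X Y : Ω → ℝ) (hX : Measurable X) (hY : Measurable Y) :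
    ∃ (Ω' : Type) (_ : MeasurableSpace Ω') (P' : Measure Ω'),
      IsProbabilityMeasure P' ∧
      ∃ (X' Y' U : Ω' → ℝ) (g : ℝ × ℝ → ℝ),
        Measurable X' ∧ Measurable Y' ∧ Measurable U ∧ Measurable g ∧
        Measure.map (fun ω => (X' ω, Y' ω)) P' = Measure.map (fun ω => (X ω, Y ω)) P ∧
        Measure.map U P' = volume.restrict (Set.Icc (0 : ℝ) 1) ∧
        IndepFun X' U P' ∧
        (∀ᵐ ω ∂P', Y' ω = g (X' ω, U ω)) ∧
        Measure.map (fun ω => (X' ω, g (X' ω, U ω))) P'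
          = Measure.map (fun ω => (X ω, Y ω)) P := by

  classical
  set ρ : Measure (ℝ × ℝ) := Measure.map (fun ω => (X ω, Y ω)) P with hρ
  haveI : IsProbabilityMeasure ρ := Measure.isProbabilityMeasure_map (hX.prodMk hY).aemeasurable
  set ν : Measure ℝ := volume.restrict (Set.Icc (0:ℝ) 1) with hν
  haveI : IsProbabilityMeasure ν := ⟨by simp [hν, Real.volume_Icc]⟩
  refine ⟨ℝ × ℝ, inferInstance, ρ.fst.prod ν, inferInstance, Prod.fst, (fun ω => qf19 ρ ω),
    Prod.snd, qf19 ρ, measurable_fst, qf19_measurable ρ, measurable_snd, qf19_measurable ρ,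
    ?_, ?_, ?_, ?_, ?_⟩
  · exact qf19_map ρ
  · rw [Measure.map_snd_prod]; simp
  · rw [indepFun_iff_measure_inter_preimage_eq_mul]
    intro s t hs ht
    have h1 : Prod.fst ⁻¹' s ∩ Prod.snd ⁻¹' t = s ×ˢ t := (Set.prod_eq s t).symm
    have h2 : (Prod.fst : ℝ × ℝ → ℝ) ⁻¹' s = s ×ˢ (Set.univ : Set ℝ) := (Set.prod_univ).symm
    have h3 : (Prod.snd : ℝ × ℝ → ℝ) ⁻¹' t = (Set.univ : Set ℝ) ×ˢ t := (Set.univ_prod).symm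
    rw [h1, h2, h3, Measure.prod_prod, Measure.prod_prod, Measure.prod_prod]
    simp
  · exact Filter.Eventually.of_forall (fun ω => rfl)
  · exact qf19_map ρ
end
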